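/- Let L be a nonempty finite set of positive integers, let a_i > 0 for each i \in L, and let \phi > 0. For vectors \nu = (\nu_i)_{i \in L} define s(\nu) = \sum_{i \in L} \nu_i and F(\nu) = \sum_{i \in L} \nu_i \log(a_i / \nu_i) + s(\nu) \log(s(\nu)/\phi), and let D = \{ \nu : \nu_i \ge 0 \text{ for all } i \in L, \sum_{i \in L} i \nu_i = 1 \}. Then F attains a maximum value M on D, and this maximum value satisfies \sum_{i \in L} a_i e^{-iM} = \phi. -/

import Mathlib

/-!
Let `M` solve `∑ aᵢ e^{-iM} = φ` (intermediate value theorem) and put `bᵢ = aᵢ e^{-iM}`, so that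
`∑ bᵢ = φ`. Since `log (aᵢ/νᵢ) = iM + log (bᵢ/νᵢ)` and `∑ i νᵢ = 1` on `D`, the functional with
weights `a` equals `M` plus the functional with weights `b`. The latter is `≤ 0` by the log-sum
inequality (termwise `log t ≤ t - 1`), with equality at `ν ∝ b`.
-/

open Real Finset Filter Topology

/-- The functional `F` of the statement; `weightedSimplex L` is its domain `D`. -/
noncomputable def entropyFunctional (L : Finset ℕ) (a : ℕ → ℝ) (φ : ℝ) (ν : ℕ → ℝ) : ℝ :=
  (∑ i ∈ L, ν i * log (a i / ν i)) + (∑ i ∈ L, ν i) * log ((∑ i ∈ L, ν i) / φ)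

def weightedSimplex (L : Finset ℕ) : Set (ℕ → ℝ) :=
  {ν | (∀ i ∈ L, 0 ≤ ν i) ∧ ∑ i ∈ L, (i : ℝ) * ν i = 1}

section

variable {L : Finset ℕ}

theorem exists_sum_mul_exp_neg_mul_eq (hL : L.Nonempty) (hLpos : ∀ i ∈ L, 0 < i)
    {a : ℕ → ℝ} (ha : ∀ i ∈ L, 0 < a i) {φ : ℝ} (hφ : 0 < φ) :
    ∃ M : ℝ, ∑ i ∈ L, a i * exp (-(i : ℝ) * M) = φ := by
  set Q : ℝ → ℝ := fun x ↦ ∑ i ∈ L, a i * exp (-(i : ℝ) * x)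
  have hQ_top : Tendsto Q atTop (𝓝 0) := by
    have h_term (i : ℕ) (hi : i ∈ L) : Tendsto (fun x ↦ a i * exp (-(i : ℝ) * x)) atTop (𝓝 0) := by
      have hi : -(i : ℝ) < 0 := neg_lt_zero.2 (Nat.cast_pos.2 (hLpos i hi))
      simpa using (tendsto_exp_atBot.comp (tendsto_id.const_mul_atTop_of_neg hi)).const_mul (a i)
    simpa only [sum_const_zero] using tendsto_finsetSum L h_term
  obtain ⟨j, hj⟩ := hL
  have hj_bot : Tendsto (fun x ↦ a j * exp (-(j : ℝ) * x)) atBot atTop :=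
    (tendsto_exp_atTop.comp (tendsto_id.const_mul_atBot_of_neg
      (neg_lt_zero.2 (Nat.cast_pos.2 (hLpos j hj))))).const_mul_atTop (ha j hj)
  obtain ⟨x₀, hx₀⟩ := (hQ_top.eventually (gt_mem_nhds hφ)).exists
  obtain ⟨x₁, hx₁⟩ := (hj_bot.eventually_ge_atTop φ).exists
  have hQx₁ : a j * exp (-(j : ℝ) * x₁) ≤ Q x₁ :=
    single_le_sum (f := fun i ↦ a i * exp (-(i : ℝ) * x₁))
      (fun i hi ↦ (mul_pos (ha i hi) (exp_pos _)).le) hj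
  exact mem_range_of_exists_le_of_exists_ge (by fun_prop) ⟨x₀, hx₀.le⟩ ⟨x₁, hx₁.trans hQx₁⟩

theorem mul_log_div_eq_mul_log_mul_exp_neg_div {y : ℝ} (hy : y ≠ 0) (x t : ℝ) :
    x * log (y / x) = x * log (y * exp (-t) / x) + t * x := by
  rcases eq_or_ne x 0 with rfl | hx
  · simp
  rw [mul_div_right_comm, log_mul (div_ne_zero hy hx) (exp_ne_zero _), log_exp]
  ring

theorem mul_log_div_add_mul_log_le {x y c : ℝ} (hx : 0 ≤ x) (hy : 0 < y) (hc : 0 < c) :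
    x * log (y / x) + x * log c ≤ c * y - x := by
  rcases hx.eq_or_lt with rfl | hx
  · simpa using (mul_pos hc hy).le
  have hcyx : 0 < c * y / x := by positivity
  calc x * log (y / x) + x * log c = x * log (c * y / x) := by
        rw [← mul_add, ← log_mul (by positivity) hc.ne', div_mul_eq_mul_div, mul_comm y]
    _ ≤ x * (c * y / x - 1) := mul_le_mul_of_nonneg_left (log_le_sub_one_of_pos hcyx) hx.le
    _ = c * y - x := by field_simp

theorem div_mul_log_div_div_self (b T : ℝ) : b / T * log (b / (b / T)) = b / T * log T := by
  rcases eq_or_ne b 0 with rfl | hb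
  · simp
  rcases eq_or_ne T 0 with rfl | hT
  · simp
  rw [div_div_cancel₀ hb]

theorem div_mul_log_div_div (s T : ℝ) : s / T * log (s / T / s) = -(s / T * log T) := by
  rcases eq_or_ne s 0 with rfl | hs
  · simp
  rw [div_div_cancel_left' hs, log_inv, mul_neg]

theorem entropyFunctional_eq_add_tilt {a : ℕ → ℝ} (ha : ∀ i ∈ L, a i ≠ 0) (φ t : ℝ) (ν : ℕ → ℝ) :
    entropyFunctional L a φ ν =
      t * ∑ i ∈ L, (i : ℝ) * ν i + entropyFunctional L (fun i ↦ a i * exp (-(i : ℝ) * t)) φ ν := by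
  have h_term (i : ℕ) (hi : i ∈ L) : ν i * log (a i / ν i) =
      ν i * log (a i * exp (-(i : ℝ) * t) / ν i) + t * ((i : ℝ) * ν i) := by
    rw [mul_log_div_eq_mul_log_mul_exp_neg_div (ha i hi) (ν i) (i * t), neg_mul]
    ring
  simp only [entropyFunctional, sum_congr rfl h_term, sum_add_distrib, ← mul_sum]
  ring

theorem entropyFunctional_div_const (b : ℕ → ℝ) (T : ℝ) :
    entropyFunctional L b (∑ i ∈ L, b i) (fun i ↦ b i / T) = 0 := by
  simp only [entropyFunctional, div_mul_log_div_div_self, ← sum_div, div_mul_log_div_div,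
    ← sum_mul]
  ring

theorem entropyFunctional_nonpos {b : ℕ → ℝ} (hb : ∀ i ∈ L, 0 < b i) {ν : ℕ → ℝ}
    (hν : ∀ i ∈ L, 0 ≤ ν i) (hs : 0 < ∑ i ∈ L, ν i) :
    entropyFunctional L b (∑ i ∈ L, b i) ν ≤ 0 := by
  set s := ∑ i ∈ L, ν i
  set φ := ∑ i ∈ L, b i
  have hφ : 0 < φ := sum_pos hb (nonempty_of_sum_ne_zero hs.ne')
  calc entropyFunctional L b φ ν = ∑ i ∈ L, (ν i * log (b i / ν i) + ν i * log (s / φ)) := by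
        rw [entropyFunctional, sum_add_distrib, sum_mul]
    _ ≤ ∑ i ∈ L, (s / φ * b i - ν i) :=
        sum_le_sum fun i hi ↦ mul_log_div_add_mul_log_le (hν i hi) (hb i hi) (by positivity)
    _ = 0 := by rw [sum_sub_distrib, ← mul_sum, div_mul_cancel₀ _ hφ.ne', sub_self]

theorem sum_pos_of_mem_weightedSimplex {ν : ℕ → ℝ} (hν : ν ∈ weightedSimplex L) :
    0 < ∑ i ∈ L, ν i := by
  refine (sum_nonneg hν.1).lt_of_ne fun hs ↦ ?_
  have hν_zero := (sum_eq_zero_iff_of_nonneg hν.1).1 hs.symm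
  have := hν.2
  rw [sum_eq_zero fun i hi ↦ by rw [hν_zero i hi, mul_zero]] at this
  exact zero_ne_one this

theorem isGreatest_entropyFunctional_image (hL : L.Nonempty) (hLpos : ∀ i ∈ L, 0 < i)
    {a : ℕ → ℝ} (ha : ∀ i ∈ L, 0 < a i) {φ M : ℝ}
    (hM : ∑ i ∈ L, a i * exp (-(i : ℝ) * M) = φ) :
    IsGreatest (entropyFunctional L a φ '' weightedSimplex L) M := by
  set b : ℕ → ℝ := fun i ↦ a i * exp (-(i : ℝ) * M)
  have hb (i : ℕ) (hi : i ∈ L) : 0 < b i := mul_pos (ha i hi) (exp_pos _)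
  have hF {ν : ℕ → ℝ} (hν : ν ∈ weightedSimplex L) :
      entropyFunctional L a φ ν = M + entropyFunctional L b (∑ i ∈ L, b i) ν := by
    rw [entropyFunctional_eq_add_tilt (fun i hi ↦ (ha i hi).ne') φ M, hν.2, mul_one, hM]
  set T := ∑ i ∈ L, (i : ℝ) * b i
  have hT : 0 < T := sum_pos (fun i hi ↦ mul_pos (by exact_mod_cast hLpos i hi) (hb i hi)) hL
  have hν_max : (fun i ↦ b i / T) ∈ weightedSimplex L := by
    refine ⟨fun i hi ↦ (div_pos (hb i hi) hT).le, ?_⟩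
    simp_rw [mul_div_assoc']
    rw [← sum_div, div_self hT.ne']
  refine ⟨⟨_, hν_max, ?_⟩, ?_⟩
  · rw [hF hν_max, entropyFunctional_div_const, add_zero]
  · rintro _ ⟨ν, hν, rfl⟩
    rw [hF hν]
    linarith [entropyFunctional_nonpos hb hν.1 (sum_pos_of_mem_weightedSimplex hν)]

end

/-- Let `L` be a nonempty finite set of positive integers, `a_i > 0` for
`i ∈ L`, and `φ > 0`. For `ν = (ν_i)_{i ∈ L}` let `s(ν) = ∑_{i∈L} ν_i` and
`F(ν) = ∑_{i∈L} ν_i log(a_i/ν_i) + s(ν) log(s(ν)/φ)`, and let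
`D = {ν : ν_i ≥ 0 for all i ∈ L, ∑_{i∈L} i ν_i = 1}`. Then `F` attains a maximum
value `M` on `D`, and this maximum value satisfies `∑_{i∈L} a_i e^{-iM} = φ`.
(The convention `0 · log(a/0) = 0` holds automatically in Lean.) -/
theorem max_value_satisfies_polynomial_equation
    (L : Finset ℕ) (hL : L.Nonempty) (hLpos : ∀ i ∈ L, 0 < i)
    (a : ℕ → ℝ) (ha : ∀ i ∈ L, 0 < a i) (φ : ℝ) (hφ : 0 < φ) :
    ∃ M : ℝ,
      IsGreatest
        ((fun ν : ℕ → ℝ =>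
            (∑ i ∈ L, ν i * Real.log (a i / ν i)) +
            (∑ i ∈ L, ν i) * Real.log ((∑ i ∈ L, ν i) / φ)) ''
          {ν : ℕ → ℝ | (∀ i ∈ L, 0 ≤ ν i) ∧ (∑ i ∈ L, (i : ℝ) * ν i) = 1}) M ∧
      (∑ i ∈ L, a i * Real.exp (-(i : ℝ) * M)) = φ := by
  obtain ⟨M, hM⟩ := exists_sum_mul_exp_neg_mul_eq hL hLpos ha hφ
  exact ⟨M, isGreatest_entropyFunctional_image hL hLpos ha hM, hM⟩
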